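/- The singular value thresholding operator H_λ is nonexpansive with respect to the Frobenius norm: ‖H_λ(M) - H_λ(N)‖_F ≤ ‖M - N‖_F for all matrices M, N of the same size and any λ ≥ 0. -/

import Mathlib

/-!
Write `R(M) = M - H_λ(M) = U_M D_r V_M*` with `r = min(s, λ)`. The thresholded values `t` are
positive only where `r = λ`, so `⟨H_λ(M), R(M)⟩ = λ ∑ tᵢ`; on the other hand every entry of
`U_M* R(N) V_M` is a product unitary · diag(r') · unitary with `0 ≤ r' ≤ λ`, hence has modulus at
most `λ`, so `⟨H_λ(M), R(N)⟩ ≤ λ ∑ tᵢ`. Adding the symmetric inequality gives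
`⟨H_λ(M) - H_λ(N), R(M) - R(N)⟩ ≥ 0` for the Frobenius inner product `⟨X, Y⟩ = Re tr(X* Y)`,
and Cauchy–Schwarz turns this firm nonexpansiveness into nonexpansiveness.
-/

open Matrix Finset WithLp

attribute [local instance] Matrix.frobeniusNormedAddCommGroup

variable {𝕜 : Type*} [RCLike 𝕜]

theorem norm_sub_le_norm_sub_of_re_inner_nonneg {E : Type*} [NormedAddCommGroup E]
    [InnerProductSpace 𝕜 E] {x y x' y' : E}
    (h : 0 ≤ RCLike.re (inner 𝕜 (x' - y') ((x - x') - (y - y')))) : ‖x' - y'‖ ≤ ‖x - y‖ := by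
  have hsq : ‖x' - y'‖ ^ 2 ≤ ‖x' - y'‖ * ‖x - y‖ :=
    calc ‖x' - y'‖ ^ 2 = RCLike.re (inner 𝕜 (x' - y') (x' - y')) := (inner_self_eq_norm_sq _).symm
      _ ≤ RCLike.re (inner 𝕜 (x' - y') (x' - y')) +
          RCLike.re (inner 𝕜 (x' - y') ((x - x') - (y - y'))) := by linarith
      _ = RCLike.re (inner 𝕜 (x' - y') (x - y)) := by
        rw [← map_add, ← inner_add_right]; congr 2; abel
      _ ≤ ‖x' - y'‖ * ‖x - y‖ := re_inner_le_norm _ _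
  nlinarith [norm_nonneg (x' - y'), norm_nonneg (x - y)]

theorem sum_ite_val_eq_le {k : ℕ} (j : ℕ) {x : ℝ} (hx : 0 ≤ x) :
    ∑ q : Fin k, (if j = (q : ℕ) then x else 0) ≤ x := by
  rw [← sum_filter, sum_const, nsmul_eq_mul]
  have hcard : (univ.filter fun q : Fin k => j = q).card ≤ 1 :=
    card_le_one.2 fun a ha b hb => Fin.ext (by simp only [mem_filter] at ha hb; omega)
  calc ((univ.filter fun q : Fin k => j = q).card : ℝ) * x ≤ 1 * x := by
        gcongr; exact_mod_cast hcard
    _ = x := one_mul x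

namespace Matrix

theorem inner_toLp_toLp_eq_trace {m n : Type*} [Fintype m] [Fintype n] (A B : Matrix m n 𝕜) :
    inner 𝕜 (toLp 2 fun i => toLp 2 (A i)) (toLp 2 fun i => toLp 2 (B i)) = trace (Aᴴ * B) := by
  simp only [PiLp.inner_apply, trace, diag, mul_apply, conjTranspose_apply, RCLike.inner_apply]
  rw [sum_comm]
  simp [mul_comm]

-- The Frobenius norm is, by definition, the norm of the nested `PiLp 2` vector used here.
theorem frobenius_norm_sub_le_of_re_trace_nonneg {m n : Type*} [Fintype m] [Fintype n]
    {A B C D : Matrix m n 𝕜} (h : 0 ≤ RCLike.re (trace ((A - B)ᴴ * ((C - A) - (D - B))))) :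
    ‖A - B‖ ≤ ‖C - D‖ := by
  rw [← inner_toLp_toLp_eq_trace] at h
  let e : Matrix m n 𝕜 → PiLp 2 fun _ : m => EuclideanSpace 𝕜 n :=
    fun X => toLp 2 fun i => toLp 2 (X i)
  exact norm_sub_le_norm_sub_of_re_inner_nonneg (x := e C) (y := e D) (x' := e A) (y' := e B) h

theorem sum_norm_sq_row_of_mem_unitaryGroup {n : Type*} [Fintype n] [DecidableEq n]
    {U : Matrix n n 𝕜} (hU : U ∈ unitaryGroup n 𝕜) (i : n) : ∑ j, ‖U i j‖ ^ 2 = 1 := by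
  have hdiag : (U * Uᴴ) i i = 1 := by
    rw [← star_eq_conjTranspose, Unitary.mul_star_self_of_mem hU, one_apply_eq]
  simp only [mul_apply, conjTranspose_apply, RCLike.star_def, RCLike.mul_conj] at hdiag
  exact_mod_cast hdiag

theorem sum_norm_sq_col_of_mem_unitaryGroup {n : Type*} [Fintype n] [DecidableEq n]
    {U : Matrix n n 𝕜} (hU : U ∈ unitaryGroup n 𝕜) (j : n) : ∑ i, ‖U i j‖ ^ 2 = 1 := by
  simpa [norm_star] using sum_norm_sq_row_of_mem_unitaryGroup (Unitary.star_mem hU) j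

theorem trace_conjTranspose_mul_mul_conjTranspose {R l m n o : Type*} [CommSemiring R] [StarRing R]
    [Fintype m] [Fintype n] [Fintype l] [Fintype o]
    (U U' : Matrix l m R) (X Y : Matrix m n R) (V V' : Matrix o n R) :
    trace ((U * X * Vᴴ)ᴴ * (U' * Y * V'ᴴ)) = trace (Xᴴ * (Uᴴ * U' * Y * (V'ᴴ * V))) := by
  simp only [conjTranspose_mul, conjTranspose_conjTranspose, Matrix.mul_assoc]
  rw [trace_mul_comm]
  simp only [Matrix.mul_assoc]

variable {m n : ℕ}

variable (𝕜) in
def rectDiag (n : ℕ) (s : Fin m → ℝ) : Matrix (Fin m) (Fin n) 𝕜 :=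
  of fun (i : Fin m) (j : Fin n) => if (i : ℕ) = (j : ℕ) then (s i : 𝕜) else 0

theorem rectDiag_sub (f g : Fin m → ℝ) :
    rectDiag 𝕜 n f - rectDiag 𝕜 n g = rectDiag 𝕜 n (f - g) := by
  ext i j
  simp only [rectDiag, sub_apply, of_apply, Pi.sub_apply, RCLike.ofReal_sub]
  split_ifs <;> simp

theorem trace_conjTranspose_rectDiag_mul (f : Fin m → ℝ) (X : Matrix (Fin m) (Fin n) 𝕜) :
    trace ((rectDiag 𝕜 n f)ᴴ * X) =
      ∑ i : Fin m, ∑ p : Fin n, if (i : ℕ) = (p : ℕ) then (f i : 𝕜) * X i p else 0 := by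
  simp only [trace, diag, Matrix.mul_apply, conjTranspose_apply, rectDiag, of_apply]
  rw [sum_comm]
  refine sum_congr rfl fun i _ => sum_congr rfl fun p _ => ?_
  split_ifs <;> simp

theorem re_trace_conjTranspose_rectDiag_mul_rectDiag (f g : Fin m → ℝ) :
    RCLike.re (trace ((rectDiag 𝕜 n f)ᴴ * rectDiag 𝕜 n g)) =
      ∑ i : Fin m, ∑ p : Fin n, if (i : ℕ) = (p : ℕ) then f i * g i else 0 := by
  simp only [trace_conjTranspose_rectDiag_mul, map_sum]
  refine sum_congr rfl fun i _ => sum_congr rfl fun p _ => ?_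
  split_ifs with h <;> simp [rectDiag, h]

theorem re_trace_conjTranspose_rectDiag_mul_le {c : ℝ} {f : Fin m → ℝ} (hf : ∀ i, 0 ≤ f i)
    {X : Matrix (Fin m) (Fin n) 𝕜} (hX : ∀ i p, ‖X i p‖ ≤ c) :
    RCLike.re (trace ((rectDiag 𝕜 n f)ᴴ * X)) ≤
      ∑ i : Fin m, ∑ p : Fin n, if (i : ℕ) = (p : ℕ) then f i * c else 0 := by
  rw [trace_conjTranspose_rectDiag_mul, map_sum]
  refine sum_le_sum fun i _ => ?_
  rw [map_sum]
  refine sum_le_sum fun p _ => ?_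
  split_ifs
  · calc RCLike.re ((f i : 𝕜) * X i p) ≤ ‖(f i : 𝕜) * X i p‖ := RCLike.re_le_norm _
      _ = f i * ‖X i p‖ := by rw [norm_mul, RCLike.norm_ofReal, abs_of_nonneg (hf i)]
      _ ≤ f i * c := mul_le_mul_of_nonneg_left (hX i p) (hf i)
  · simp

theorem norm_mul_rectDiag_mul_apply_le {c : ℝ} (hc : 0 ≤ c) {g : Fin m → ℝ}
    (hg0 : ∀ j, 0 ≤ g j) (hgc : ∀ j, g j ≤ c)
    {A : Matrix (Fin m) (Fin m) 𝕜} {C : Matrix (Fin n) (Fin n) 𝕜}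
    (hA : A ∈ unitaryGroup (Fin m) 𝕜) (hC : C ∈ unitaryGroup (Fin n) 𝕜) (i : Fin m) (p : Fin n) :
    ‖(A * rectDiag 𝕜 n g * C) i p‖ ≤ c := by
  have hexp : (A * rectDiag 𝕜 n g * C) i p =
      ∑ j, ∑ q, A i j * rectDiag 𝕜 n g j q * C q p := by
    simp only [Matrix.mul_apply, sum_mul]
    exact sum_comm
  calc ‖(A * rectDiag 𝕜 n g * C) i p‖
      ≤ ∑ j : Fin m, ∑ q : Fin n, if (j : ℕ) = (q : ℕ) then c * (‖A i j‖ * ‖C q p‖) else 0 := by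
        rw [hexp]
        refine (norm_sum_le _ _).trans (sum_le_sum fun j _ => ?_)
        refine (norm_sum_le _ _).trans (sum_le_sum fun q _ => ?_)
        simp only [rectDiag, of_apply]
        split_ifs
        · calc ‖A i j * (g j : 𝕜) * C q p‖ = g j * (‖A i j‖ * ‖C q p‖) := by
                rw [norm_mul, norm_mul, RCLike.norm_ofReal, abs_of_nonneg (hg0 j)]; ring
            _ ≤ c * (‖A i j‖ * ‖C q p‖) := by gcongr; exact hgc j
        · simp
    _ ≤ ∑ j : Fin m, ∑ q : Fin n,
          c / 2 * ((if (j : ℕ) = (q : ℕ) then ‖A i j‖ ^ 2 else 0) +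
            (if (j : ℕ) = (q : ℕ) then ‖C q p‖ ^ 2 else 0)) := by
        gcongr with j _ q _
        split_ifs
        · have := mul_le_mul_of_nonneg_left (two_mul_le_add_sq ‖A i j‖ ‖C q p‖) hc
          linarith
        · simp
    _ = c / 2 * (∑ j : Fin m, ∑ q : Fin n, (if (j : ℕ) = (q : ℕ) then ‖A i j‖ ^ 2 else 0) +
          ∑ q : Fin n, ∑ j : Fin m, (if (j : ℕ) = (q : ℕ) then ‖C q p‖ ^ 2 else 0)) := by
        rw [sum_comm (f := fun (q : Fin n) (j : Fin m) =>
          if (j : ℕ) = (q : ℕ) then ‖C q p‖ ^ 2 else 0)]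
        simp only [← mul_sum, ← sum_add_distrib]
    _ ≤ c / 2 * (1 + 1) := by
        gcongr
        · rw [← sum_norm_sq_row_of_mem_unitaryGroup hA i]
          exact sum_le_sum fun j _ => sum_ite_val_eq_le _ (sq_nonneg _)
        · rw [← sum_norm_sq_col_of_mem_unitaryGroup hC p]
          refine sum_le_sum fun q _ => ?_
          simp only [eq_comm (a := ((_ : Fin m) : ℕ))]
          exact sum_ite_val_eq_le _ (sq_nonneg _)
    _ = c := by ring

-- `U D_r Vᴴ` is a subgradient of `c ‖·‖_*` at `U D_t Vᴴ`.
theorem re_trace_pairing_le {c : ℝ} (hc : 0 ≤ c)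
    {U U' : Matrix (Fin m) (Fin m) 𝕜} {V V' : Matrix (Fin n) (Fin n) 𝕜}
    (hU : U ∈ unitaryGroup (Fin m) 𝕜) (hU' : U' ∈ unitaryGroup (Fin m) 𝕜)
    (hV : V ∈ unitaryGroup (Fin n) 𝕜) (hV' : V' ∈ unitaryGroup (Fin n) 𝕜)
    {t r r' : Fin m → ℝ} (ht : ∀ i, 0 ≤ t i) (htr : ∀ i, t i * r i = t i * c)
    (hr'0 : ∀ i, 0 ≤ r' i) (hr'c : ∀ i, r' i ≤ c) :
    RCLike.re (trace ((U * rectDiag 𝕜 n t * Vᴴ)ᴴ * (U' * rectDiag 𝕜 n r' * V'ᴴ))) ≤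
      RCLike.re (trace ((U * rectDiag 𝕜 n t * Vᴴ)ᴴ * (U * rectDiag 𝕜 n r * Vᴴ))) := by
  have hUU : Uᴴ * U = 1 := Unitary.star_mul_self_of_mem hU
  have hVV : Vᴴ * V = 1 := Unitary.star_mul_self_of_mem hV
  have hA : Uᴴ * U' ∈ unitaryGroup (Fin m) 𝕜 := mul_mem (Unitary.star_mem hU) hU'
  have hC : V'ᴴ * V ∈ unitaryGroup (Fin n) 𝕜 := mul_mem (Unitary.star_mem hV') hV
  rw [trace_conjTranspose_mul_mul_conjTranspose, trace_conjTranspose_mul_mul_conjTranspose, hUU,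
    hVV, Matrix.one_mul, Matrix.mul_one, re_trace_conjTranspose_rectDiag_mul_rectDiag]
  simp only [htr]
  exact re_trace_conjTranspose_rectDiag_mul_le ht
    (norm_mul_rectDiag_mul_apply_le hc hr'0 hr'c hA hC)

end Matrix

def softThreshold (c s : ℝ) : ℝ := max (s - c) 0

theorem softThreshold_nonneg (c s : ℝ) : 0 ≤ softThreshold c s := le_max_right _ _

theorem sub_softThreshold_nonneg {c s : ℝ} (hc : 0 ≤ c) (hs : 0 ≤ s) :
    0 ≤ s - softThreshold c s := by
  unfold softThreshold; cases max_cases (s - c) 0 <;> linarith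

theorem sub_softThreshold_le (c s : ℝ) : s - softThreshold c s ≤ c := by
  unfold softThreshold; cases max_cases (s - c) 0 <;> linarith

theorem softThreshold_mul_sub_softThreshold (c s : ℝ) :
    softThreshold c s * (s - softThreshold c s) = softThreshold c s * c := by
  unfold softThreshold
  rcases max_cases (s - c) 0 with ⟨h, _⟩ | ⟨h, _⟩ <;> rw [h] <;> ring

/-- SVT is nonexpansive in the Frobenius norm. -/
theorem svt_nonexpansive_frobenius {m n : ℕ} (lam : ℝ) (hlam : 0 ≤ lam)
    (UM : Matrix (Fin m) (Fin m) ℂ) (VM : Matrix (Fin n) (Fin n) ℂ)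
    (UN : Matrix (Fin m) (Fin m) ℂ) (VN : Matrix (Fin n) (Fin n) ℂ)
    (hUM : UM ∈ Matrix.unitaryGroup (Fin m) ℂ) (hVM : VM ∈ Matrix.unitaryGroup (Fin n) ℂ)
    (hUN : UN ∈ Matrix.unitaryGroup (Fin m) ℂ) (hVN : VN ∈ Matrix.unitaryGroup (Fin n) ℂ)
    (sM sN : Fin m → ℝ) (hsM : ∀ i, 0 ≤ sM i) (hsN : ∀ i, 0 ≤ sN i)
    (M N HM HN : Matrix (Fin m) (Fin n) ℂ)
    (hM : M = UM * (Matrix.of fun (i : Fin m) (j : Fin n) =>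
      if (i : ℕ) = (j : ℕ) then (sM i : ℂ) else 0) * VMᴴ)
    (hN : N = UN * (Matrix.of fun (i : Fin m) (j : Fin n) =>
      if (i : ℕ) = (j : ℕ) then (sN i : ℂ) else 0) * VNᴴ)
    (hHM : HM = UM * (Matrix.of fun (i : Fin m) (j : Fin n) =>
      if (i : ℕ) = (j : ℕ) then ((max (sM i - lam) 0 : ℝ) : ℂ) else 0) * VMᴴ)
    (hHN : HN = UN * (Matrix.of fun (i : Fin m) (j : Fin n) =>
      if (i : ℕ) = (j : ℕ) then ((max (sN i - lam) 0 : ℝ) : ℂ) else 0) * VNᴴ) :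
    ‖HM - HN‖ ≤ ‖M - N‖ := by
  let tM : Fin m → ℝ := fun i => softThreshold lam (sM i)
  let tN : Fin m → ℝ := fun i => softThreshold lam (sN i)
  replace hM : M = UM * rectDiag ℂ n sM * VMᴴ := hM
  replace hN : N = UN * rectDiag ℂ n sN * VNᴴ := hN
  replace hHM : HM = UM * rectDiag ℂ n tM * VMᴴ := hHM
  replace hHN : HN = UN * rectDiag ℂ n tN * VNᴴ := hHN
  have hRM : M - HM = UM * rectDiag ℂ n (sM - tM) * VMᴴ := by
    rw [hM, hHM, ← Matrix.sub_mul, ← Matrix.mul_sub, ← rectDiag_sub]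
  have hRN : N - HN = UN * rectDiag ℂ n (sN - tN) * VNᴴ := by
    rw [hN, hHN, ← Matrix.sub_mul, ← Matrix.mul_sub, ← rectDiag_sub]
  have hMN := re_trace_pairing_le (t := tM) (r := sM - tM) (r' := sN - tN) hlam hUM hUN hVM hVN
    (fun i => softThreshold_nonneg lam (sM i))
    (fun i => softThreshold_mul_sub_softThreshold lam (sM i))
    (fun i => sub_softThreshold_nonneg hlam (hsN i)) (fun i => sub_softThreshold_le lam (sN i))
  have hNM := re_trace_pairing_le (t := tN) (r := sN - tN) (r' := sM - tM) hlam hUN hUM hVN hVM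
    (fun i => softThreshold_nonneg lam (sN i))
    (fun i => softThreshold_mul_sub_softThreshold lam (sN i))
    (fun i => sub_softThreshold_nonneg hlam (hsM i)) (fun i => sub_softThreshold_le lam (sM i))
  refine Matrix.frobenius_norm_sub_le_of_re_trace_nonneg ?_
  rw [hRM, hRN, hHM, hHN]
  simp only [conjTranspose_sub, Matrix.sub_mul, Matrix.mul_sub, trace_sub, map_sub]
  linarith
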